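/- Let D be a digraph of order p ≥ 3 containing a path P = x₁x₂⋯x_m with 2 ≤ m ≤ p−1, and let x be a vertex not on P. If d(x, V(P)) ≥ m and neither x x₁ nor x_m x is an arc of D, then there exists an index i with 1 ≤ i ≤ m−1 such that both x_i x and x x_{i+1} are arcs of D. -/
import Mathlib


variable {V : Type*}

/-- Out-degree of `u` in the digraph with arc relation `A`. -/
noncomputable def outDeg (A : V → V → Prop) (u : V) : ℕ := Nat.card {v | A u v}

/-- In-degree of `u`. -/
noncomputable def inDeg (A : V → V → Prop) (u : V) : ℕ := Nat.card {v | A v u}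

/-- Degree of `u`: out-degree plus in-degree. -/
noncomputable def deg (A : V → V → Prop) (u : V) : ℕ := outDeg A u + inDeg A u

/-- Number of arcs between `u` and the set `S`, counting both directions. -/
noncomputable def degOn (A : V → V → Prop) (u : V) (S : Set V) : ℕ :=
  Nat.card {v | v ∈ S ∧ A u v} + Nat.card {v | v ∈ S ∧ A v u}

/-- `x : Fin m → V` is a directed path (distinct vertices, consecutive arcs). -/
def IsPath (A : V → V → Prop) {m : ℕ} (x : Fin m → V) : Prop :=
  Function.Injective x ∧ ∀ (i : ℕ) (h : i + 1 < m), A (x ⟨i, by omega⟩) (x ⟨i + 1, h⟩)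

/-- `x : Fin m → V` is a directed cycle (distinct vertices, cyclically consecutive arcs). -/
def IsCycle (A : V → V → Prop) {m : ℕ} (x : Fin m → V) : Prop :=
  Function.Injective x ∧
    ∀ (i : ℕ) (h : i < m), A (x ⟨i, h⟩) (x ⟨(i + 1) % m, Nat.mod_lt _ (by omega)⟩)

/-- Strong connectivity: every vertex reaches every other by a directed path. -/
def Strong (A : V → V → Prop) : Prop := ∀ x y : V, Relation.ReflTransGen A x y

/-- 2-strong connectivity: order at least 3 and deleting any vertex leaves a strong digraph. -/
def TwoStrong (A : V → V → Prop) : Prop :=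
  3 ≤ Nat.card V ∧ ∀ w : V, Strong (fun a b : {v : V // v ≠ w} => A a.1 b.1)

/-- The digraph is Hamiltonian: it has a directed cycle through all vertices. -/
def Hamiltonian (A : V → V → Prop) : Prop :=
  ∃ c : Fin (Nat.card V) → V, Function.Bijective c ∧ IsCycle A c

/-- The digraph has a Hamiltonian bypass: a Hamiltonian directed path whose
initial vertex dominates its terminal vertex. -/
def HasHamBypass (A : V → V → Prop) : Prop :=
  ∃ f : Fin (Nat.card V) → V, Function.Bijective f ∧
    (∀ (i : ℕ) (h : i + 1 < Nat.card V), A (f ⟨i, by omega⟩) (f ⟨i + 1, h⟩)) ∧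
    ∃ h0 : 0 < Nat.card V, A (f ⟨0, h0⟩) (f ⟨Nat.card V - 1, by omega⟩)

/-- insertion lemma, case d(x,V(P)) ≥ m with both end arcs missing. -/
theorem stmt2 {V : Type*} (A : V → V → Prop) (hloop : ∀ v, ¬ A v v)
    (p : ℕ) (hp : 3 ≤ p) (hcard : Nat.card V = p)
    (m : ℕ) (hm2 : 2 ≤ m) (hmp : m ≤ p - 1)
    (x : Fin m → V) (hpath : IsPath A x)
    (v : V) (hv : v ∉ Set.range x)
    (hdeg : m ≤ degOn A v (Set.range x))
    (hend1 : ¬ A v (x ⟨0, by omega⟩)) (hend2 : ¬ A (x ⟨m - 1, by omega⟩) v) :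
    ∃ (i : ℕ) (h : i + 1 < m), A (x ⟨i, by omega⟩) v ∧ A v (x ⟨i + 1, h⟩) := by
  classical
  by_contra hcon
  push_neg at hcon
  have hxinj := hpath.1
  have hm0 : 0 < m := by omega
  haveI : NeZero m := ⟨by omega⟩
  set S : Finset (Fin m) := Finset.univ.filter (fun i => A v (x i)) with hS
  set T : Finset (Fin m) := Finset.univ.filter (fun i => A (x i) v) with hT
  -- degOn counts exactly these
  have hset1 : {w | w ∈ Set.range x ∧ A v w} = x '' {i | A v (x i)} := by
    ext w
    constructor
    · rintro ⟨⟨i, rfl⟩, ha⟩; exact ⟨i, ha, rfl⟩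
    · rintro ⟨i, ha, rfl⟩; exact ⟨⟨i, rfl⟩, ha⟩
  have hset2 : {w | w ∈ Set.range x ∧ A w v} = x '' {i | A (x i) v} := by
    ext w
    constructor
    · rintro ⟨⟨i, rfl⟩, ha⟩; exact ⟨i, ha, rfl⟩
    · rintro ⟨i, ha, rfl⟩; exact ⟨⟨i, rfl⟩, ha⟩
  have hc1 : Nat.card {w | w ∈ Set.range x ∧ A v w} = S.card := by
    rw [Nat.card_coe_set_eq, hset1, Set.ncard_image_of_injective _ hxinj,
      Set.ncard_eq_toFinset_card']
    simp [hS]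
  have hc2 : Nat.card {w | w ∈ Set.range x ∧ A w v} = T.card := by
    rw [Nat.card_coe_set_eq, hset2, Set.ncard_image_of_injective _ hxinj,
      Set.ncard_eq_toFinset_card']
    simp [hT]
  have hdeg' : m ≤ S.card + T.card := by
    have : degOn A v (Set.range x) = S.card + T.card := by
      rw [degOn, hc1, hc2]
    omega
  -- every element of T has value < m - 1
  have hTlt : ∀ i ∈ T, i.1 + 1 < m := by
    intro i hi
    rcases Nat.lt_or_ge (i.1 + 1) m with h | h
    · exact h
    · exfalso
      have : i = ⟨m - 1, by omega⟩ := Fin.ext (show i.1 = m - 1 by have := i.2; omega)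
      rw [hS, hT] at *
      simp only [Finset.mem_filter] at hi
      exact hend2 (this ▸ hi.2)
  set T' : Finset (Fin m) := T.image (fun i => i + 1) with hT'
  have hT'card : T'.card = T.card := Finset.card_image_of_injective _ (add_left_injective 1)
  have hval : ∀ i ∈ T, ((i + 1 : Fin m)).1 = i.1 + 1 := by
    intro i hi
    have h1 := hTlt i hi
    have : ((i + 1 : Fin m)).1 = (i.1 + 1) % m := by
      simp [Fin.add_def]
    rw [this, Nat.mod_eq_of_lt h1]
  have hdisj : Disjoint S T' := by
    rw [Finset.disjoint_left]
    intro j hjS hjT'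
    rw [hT', Finset.mem_image] at hjT'
    obtain ⟨i, hiT, rfl⟩ := hjT'
    have h1 := hTlt i hiT
    have hAi : A (x i) v := by
      have := hiT; rw [hT, Finset.mem_filter] at this; exact this.2
    have hAj : A v (x (i + 1)) := by
      have := hjS; rw [hS, Finset.mem_filter] at this; exact this.2
    have hx1 : x (i + 1) = x ⟨i.1 + 1, h1⟩ := by
      congr 1
      exact Fin.ext (hval i hiT)
    have hxi : x i = x ⟨i.1, by omega⟩ := by congr 1
    exact hcon i.1 h1 (hxi ▸ hAi) (hx1 ▸ hAj)
  have h0S : (⟨0, hm0⟩ : Fin m) ∉ S := by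
    rw [hS, Finset.mem_filter]
    rintro ⟨-, h⟩
    exact hend1 h
  have h0T' : (⟨0, hm0⟩ : Fin m) ∉ T' := by
    rw [hT', Finset.mem_image]
    rintro ⟨i, hiT, heq⟩
    have := hval i hiT
    rw [heq] at this
    simp at this
  have hsub : S ∪ T' ⊆ Finset.univ.erase ⟨0, hm0⟩ := by
    intro j hj
    rw [Finset.mem_erase]
    refine ⟨?_, Finset.mem_univ _⟩
    rintro rfl
    rcases Finset.mem_union.1 hj with h | h
    · exact h0S h
    · exact h0T' h
  have hle : (S ∪ T').card ≤ m - 1 := by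
    calc (S ∪ T').card ≤ (Finset.univ.erase (⟨0, hm0⟩ : Fin m)).card :=
          Finset.card_le_card hsub
    _ = m - 1 := by rw [Finset.card_erase_of_mem (Finset.mem_univ _)]; simp
  rw [Finset.card_union_of_disjoint hdisj, hT'card] at hle
  omega
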